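/- Let d ≥ 1, let M be a real d×d matrix whose singular values satisfy σ_i(M) ≤ C·i^(−α) for all 1 ≤ i ≤ d, where C > 0 and α > 1/2. Then for every ε > 0, if r is a natural number with r ≥ (C²/((2α−1)·ε²))^(1/(2α−1)), there exists a real d×d matrix Δ with rank(Δ) ≤ r and ‖M − Δ‖_F ≤ ε. In particular, in the setting of the Representation Transfer Bound, taking M = W* − I (the deviation of the optimal linear aligner from the identity), a rank-r LoRA-style update Δ with ‖(W* − I) − Δ‖_F ≤ ε exists whenever r ≥ (C²/((2α−1)·ε²))^(1/(2α−1)). -/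

import Mathlib

open scoped BigOperators

/-- Frobenius norm of a real matrix. -/
noncomputable def frobNorm {m n : ℕ} (M : Matrix (Fin m) (Fin n) ℝ) : ℝ :=
  Real.sqrt (∑ i, ∑ j, (M i j) ^ 2)

/-- Singular values of a real `d × d` matrix, listed in decreasing order:
the square roots of the eigenvalues of `Mᵀ * M`, sorted decreasingly
(index `0` is the largest singular value `σ₁`). -/
noncomputable def singularValues {d : ℕ} (M : Matrix (Fin d) (Fin d) ℝ) : Fin d → ℝ :=
  fun i =>
    Real.sqrt
      (((show (Matrix.transpose M * M).IsHermitian by simpa using Matrix.isHermitian_conjTranspose_mul_self M).eigenvalues ∘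
          Tuple.sort ((show (Matrix.transpose M * M).IsHermitian by simpa using Matrix.isHermitian_conjTranspose_mul_self M).eigenvalues)) i.rev)

/-- Condition number of a Hermitian (e.g. positive definite) real matrix:
ratio of its largest to its smallest eigenvalue. -/
noncomputable def condNumber {d : ℕ} (A : Matrix (Fin d) (Fin d) ℝ)
    (hA : A.IsHermitian) : ℝ :=
  (⨆ i, hA.eigenvalues i) / (⨅ i, hA.eigenvalues i)

/-!
Let `P` be the orthogonal projection onto the eigenvectors of `Mᵀ M` belonging to its `r` largest
eigenvalues. Then `Δ = M P` has rank at most `r`, and `‖M - Δ‖_F² = tr ((1 - P) Mᵀ M (1 - P))` is the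
sum of the remaining eigenvalues, i.e. `∑_{i > r} σᵢ²`. The decay hypothesis bounds this tail by
`C² ∑_{i > r} i^(-2α) ≤ C² ∫_r^∞ x^(-2α) dx = C² r^(1-2α) / (2α - 1)`, which is at most `ε²` as soon
as `r` reaches the stated threshold.
-/

open Matrix Finset

lemma sum_sq_eq_trace_transpose_mul_self {m n : Type*} [Fintype m] [Fintype n]
    (A : Matrix m n ℝ) : ∑ i, ∑ j, A i j ^ 2 = trace (Aᵀ * A) := by
  simp only [trace, Matrix.diag, mul_apply, transpose_apply, sq]
  exact sum_comm

lemma isHermitian_transpose_mul_self {m n : Type*} [Fintype m] (M : Matrix m n ℝ) :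
    (Mᵀ * M).IsHermitian := by
  simpa using isHermitian_conjTranspose_mul_self M

section OrthogonalConjugation

variable {n : Type*} [Fintype n] [DecidableEq n] {U : Matrix n n ℝ}

lemma transpose_mul_diagonal_mul_star (a : n → ℝ) :
    (U * diagonal a * star U)ᵀ = U * diagonal a * star U := by
  simp [transpose_mul, star_eq_conjTranspose, conjTranspose_eq_transpose_of_trivial, mul_assoc]

lemma mul_diagonal_mul_star_mul (hU : U ∈ unitaryGroup n ℝ) (a b : n → ℝ) :
    U * diagonal a * star U * (U * diagonal b * star U) = U * diagonal (a * b) * star U := by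
  rw [show diagonal (a * b) = diagonal a * diagonal b from (diagonal_mul_diagonal a b).symm]
  simp only [mul_assoc, ← mul_assoc (star U) U, mem_unitaryGroup_iff'.1 hU, one_mul]

lemma trace_mul_diagonal_mul_star (hU : U ∈ unitaryGroup n ℝ) (a : n → ℝ) :
    trace (U * diagonal a * star U) = ∑ i, a i := by
  rw [trace_mul_cycle, mem_unitaryGroup_iff'.1 hU, one_mul, trace_diagonal]

end OrthogonalConjugation

/-- The witness is `Δ = M P`, with `P` the orthogonal projection onto the eigenvectors of `Mᵀ M`
indexed by `S`. -/
lemma exists_rank_le_card_sum_sq_sub_eq {m n : Type*} [Fintype m] [Fintype n] [DecidableEq n]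
    (M : Matrix m n ℝ) (S : Finset n) :
    ∃ Δ : Matrix m n ℝ, Δ.rank ≤ #S ∧
      ∑ i, ∑ j, (M - Δ) i j ^ 2 = ∑ k ∈ Sᶜ, (isHermitian_transpose_mul_self M).eigenvalues k := by
  set hA := isHermitian_transpose_mul_self M
  set U : Matrix n n ℝ := (hA.eigenvectorUnitary : Matrix n n ℝ)
  have hU : U ∈ unitaryGroup n ℝ := hA.eigenvectorUnitary.2
  set lam := hA.eigenvalues
  set p : n → ℝ := fun k => if k ∈ S then 1 else 0
  have hspec : Mᵀ * M = U * diagonal lam * star U := by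
    simpa using hA.spectral_theorem
  have hsplit : M - M * (U * diagonal p * star U) = M * (U * diagonal (1 - p) * star U) := by
    rw [show diagonal (1 - p) = 1 - diagonal p from (diagonal_sub 1 p).symm, Matrix.mul_sub,
      Matrix.sub_mul, Matrix.mul_one, mem_unitaryGroup_iff.1 hU, Matrix.mul_sub, Matrix.mul_one]
  refine ⟨M * (U * diagonal p * star U), ?_, ?_⟩
  · calc (M * (U * diagonal p * star U)).rank ≤ (diagonal p).rank :=
          ((rank_mul_le_right _ _).trans (rank_mul_le_left _ _)).trans (rank_mul_le_right _ _)
      _ = #S := by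
        rw [rank_diagonal, Fintype.card_subtype]
        congr 1
        ext k
        simp [p]
  · rw [hsplit, sum_sq_eq_trace_transpose_mul_self, transpose_mul, transpose_mul_diagonal_mul_star,
      Matrix.mul_assoc, ← Matrix.mul_assoc Mᵀ, hspec, mul_diagonal_mul_star_mul hU,
      mul_diagonal_mul_star_mul hU, trace_mul_diagonal_mul_star hU, ← sum_compl_add_sum S]
    have hS : ∀ k ∈ S, ((1 - p) * (lam * (1 - p))) k = 0 := by
      intro k hk
      simp [p, hk]
    rw [sum_eq_zero hS, add_zero]
    refine sum_congr rfl fun k hk => ?_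
    simp [p, mem_compl.1 hk]

lemma singularValues_sq {d : ℕ} (M : Matrix (Fin d) (Fin d) ℝ) (i : Fin d) :
    singularValues M i ^ 2 = (isHermitian_transpose_mul_self M).eigenvalues
      (Tuple.sort (isHermitian_transpose_mul_self M).eigenvalues i.rev) := by
  refine Real.sq_sqrt (PosSemidef.eigenvalues_nonneg ?_ _)
  simpa using posSemidef_conjTranspose_mul_self M

lemma exists_rank_le_sum_sq_sub_eq_sum_singularValues_sq {d : ℕ} (M : Matrix (Fin d) (Fin d) ℝ)
    (r : ℕ) : ∃ Δ : Matrix (Fin d) (Fin d) ℝ, Δ.rank ≤ r ∧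
      ∑ i, ∑ j, (M - Δ) i j ^ 2 = ∑ i : Fin d with r ≤ i.val, singularValues M i ^ 2 := by
  set e : Fin d ≃ Fin d :=
    Fin.revPerm.trans (Tuple.sort (isHermitian_transpose_mul_self M).eigenvalues)
  obtain ⟨Δ, hrank, hΔ⟩ :=
    exists_rank_le_card_sum_sq_sub_eq M ((univ.filter fun i : Fin d => i.val < r).map e.toEmbedding)
  refine ⟨Δ, hrank.trans ?_, hΔ.trans ?_⟩
  · rw [card_map, Fin.card_filter_val_lt]
    exact min_le_right _ _
  · refine (sum_equiv e (fun i => ?_) fun i _ => singularValues_sq M i).symm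
    simp

lemma sum_Ico_rpow_le {β : ℝ} (hβ : 0 < β) {r : ℕ} (hr : 0 < r) (d : ℕ) :
    ∑ i ∈ Ico r d, ((i + 1 : ℕ) : ℝ) ^ (-(β + 1)) ≤ (r : ℝ) ^ (-β) / β := by
  rcases le_or_gt r d with hrd | hdr
  · have hr0 : (0 : ℝ) < r := by exact_mod_cast hr
    have hanti : AntitoneOn (fun x : ℝ => x ^ (-(β + 1))) (Set.Icc r d) :=
      (Real.antitoneOn_rpow_Ioi_of_exponent_nonpos (by linarith)).mono
        fun x hx => hr0.trans_le hx.1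
    have hzero : (0 : ℝ) ∉ Set.uIcc (r : ℝ) d := by
      rw [Set.uIcc_of_le (by exact_mod_cast hrd)]
      exact fun h => hr0.not_ge h.1
    calc ∑ i ∈ Ico r d, ((i + 1 : ℕ) : ℝ) ^ (-(β + 1))
        ≤ ∫ x in (r : ℝ)..d, x ^ (-(β + 1)) := hanti.sum_le_integral_Ico hrd
      _ = ((r : ℝ) ^ (-β) - (d : ℝ) ^ (-β)) / β := by
        rw [integral_rpow (Or.inr ⟨by linarith, hzero⟩), show -(β + 1) + 1 = -β by ring, div_neg,
          ← neg_div, neg_sub]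
      _ ≤ (r : ℝ) ^ (-β) / β := by
        gcongr
        exact sub_le_self _ (by positivity)
  · rw [Ico_eq_empty_of_le hdr.le, sum_empty]
    positivity

lemma Fin.sum_filter_le_val_eq_sum_Ico {β : Type*} [AddCommMonoid β] {d : ℕ} (r : ℕ)
    (g : ℕ → β) : ∑ i : Fin d with r ≤ i.val, g i = ∑ i ∈ Ico r d, g i := by
  rw [sum_filter, Fin.sum_univ_eq_sum_range (fun i => if r ≤ i then g i else 0), ← sum_filter,
    range_eq_Ico, Ico_filter_le, max_eq_right (Nat.zero_le r)]

lemma sum_filter_sq_le_of_le_mul_rpow {d r : ℕ} (hr : 0 < r) {s : Fin d → ℝ} {C α : ℝ}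
    (hα : 1 / 2 < α) (hs₀ : ∀ i, 0 ≤ s i) (hs : ∀ i, s i ≤ C * ((i : ℝ) + 1) ^ (-α)) :
    ∑ i : Fin d with r ≤ i.val, s i ^ 2 ≤ C ^ 2 * ((r : ℝ) ^ (-(2 * α - 1)) / (2 * α - 1)) := by
  have hsq : ∀ i, s i ^ 2 ≤ C ^ 2 * ((i + 1 : ℕ) : ℝ) ^ (-((2 * α - 1) + 1)) := fun i => by
    calc s i ^ 2 ≤ (C * ((i : ℝ) + 1) ^ (-α)) ^ 2 := pow_le_pow_left₀ (hs₀ i) (hs i) 2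
      _ = C ^ 2 * ((i + 1 : ℕ) : ℝ) ^ (-((2 * α - 1) + 1)) := by
        rw [mul_pow, ← Real.rpow_mul_natCast (by positivity),
          show -α * (2 : ℕ) = -((2 * α - 1) + 1) by push_cast; ring]
        push_cast
        rfl
  calc ∑ i : Fin d with r ≤ i.val, s i ^ 2
      ≤ ∑ i : Fin d with r ≤ i.val, C ^ 2 * ((i + 1 : ℕ) : ℝ) ^ (-((2 * α - 1) + 1)) :=
        sum_le_sum fun i _ => hsq i
    _ = C ^ 2 * ∑ i ∈ Ico r d, ((i + 1 : ℕ) : ℝ) ^ (-((2 * α - 1) + 1)) := by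
      rw [← mul_sum, Fin.sum_filter_le_val_eq_sum_Ico r fun i => ((i + 1 : ℕ) : ℝ) ^ _]
    _ ≤ C ^ 2 * ((r : ℝ) ^ (-(2 * α - 1)) / (2 * α - 1)) := by
      gcongr
      exact sum_Ico_rpow_le (by linarith) hr d

lemma mul_rpow_neg_div_le_of_rpow_one_div_le {a b β r : ℝ} (ha : 0 < a) (hb : 0 < b)
    (hβ : 0 < β) (hr : (a / (β * b)) ^ (1 / β) ≤ r) : a * (r ^ (-β) / β) ≤ b := by
  have hr₀ : 0 < r := lt_of_lt_of_le (by positivity) hr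
  have hrβ : a / (β * b) ≤ r ^ β :=
    (Real.rpow_inv_le_iff_of_pos (by positivity) hr₀.le hβ).1 (by rwa [← one_div])
  rw [div_le_iff₀ (by positivity)] at hrβ
  calc a * (r ^ (-β) / β) = a / (r ^ β * β) := by
        rw [Real.rpow_neg hr₀.le]
        field_simp
    _ ≤ b := by
        rw [div_le_iff₀ (by positivity)]
        linarith

theorem rank_r_approximation_exists_general
    {d : ℕ} (M : Matrix (Fin d) (Fin d) ℝ)
    (C α : ℝ) (hC : 0 < C) (hα : 1 / 2 < α)
    (hdecay : ∀ i : Fin d, singularValues M i ≤ C * ((i : ℝ) + 1) ^ (-α)) :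
    ∀ ε > (0 : ℝ), ∀ r : ℕ,
      (C ^ 2 / ((2 * α - 1) * ε ^ 2)) ^ (1 / (2 * α - 1)) ≤ (r : ℝ) →
      ∃ Δ : Matrix (Fin d) (Fin d) ℝ, Δ.rank ≤ r ∧ frobNorm (M - Δ) ≤ ε := by
  intro ε hε r hr
  have hβ : 0 < 2 * α - 1 := by linarith
  have hr₀ : (0 : ℝ) < r := lt_of_lt_of_le (by positivity) hr
  obtain ⟨Δ, hrank, hΔ⟩ := exists_rank_le_sum_sq_sub_eq_sum_singularValues_sq M r
  refine ⟨Δ, hrank, (Real.sqrt_le_left hε.le).2 ?_⟩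
  calc ∑ i, ∑ j, (M - Δ) i j ^ 2 = ∑ i : Fin d with r ≤ i.val, singularValues M i ^ 2 := hΔ
    _ ≤ C ^ 2 * ((r : ℝ) ^ (-(2 * α - 1)) / (2 * α - 1)) :=
      sum_filter_sq_le_of_le_mul_rpow (Nat.cast_pos.1 hr₀) hα (fun i => Real.sqrt_nonneg _) hdecay
    _ ≤ ε ^ 2 := mul_rpow_neg_div_le_of_rpow_one_div_le (by positivity) (by positivity) hβ hr

/-- If the singular values of a real d×d matrix decay like
σ_i(M) ≤ C·i^(−α) (α > 1/2), then for every ε > 0 and every natural number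
r ≥ (C²/((2α−1)·ε²))^(1/(2α−1)) there is a rank-≤r matrix Δ with ‖M − Δ‖_F ≤ ε.
(Here the index i : Fin d corresponds to the mathematical index i + 1.) -/
theorem rank_r_approximation_exists
    {d : ℕ} (hd : 1 ≤ d) (M : Matrix (Fin d) (Fin d) ℝ)
    (C α : ℝ) (hC : 0 < C) (hα : 1 / 2 < α)
    (hdecay : ∀ i : Fin d, singularValues M i ≤ C * ((i : ℝ) + 1) ^ (-α)) :
    ∀ ε > (0 : ℝ), ∀ r : ℕ,
      (C ^ 2 / ((2 * α - 1) * ε ^ 2)) ^ (1 / (2 * α - 1)) ≤ (r : ℝ) →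
      ∃ Δ : Matrix (Fin d) (Fin d) ℝ, Δ.rank ≤ r ∧ frobNorm (M - Δ) ≤ ε :=
  rank_r_approximation_exists_general M C α hC hα hdecay
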